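/- If the program P is incomplete for the model M (i.e., some atom R(c̄) is in M but not in I(P,M)), then Γ_M ⊢ B is intuitionistically derivable. -/

import Mathlib

namespace ASP

/-- A ground clause `head ← pos, ¬neg` of an answer set program. -/
structure GClause (α : Type) where
  head : α
  pos : List α
  neg : List α

variable {α : Type}

/-- Immediate-consequence operator of the Gelfond–Lifschitz reduct `P^M`:
`F(I) = I ∪ {a | some clause a ← a₁,…,aₙ of P^M has all aᵢ ∈ I}`. -/
def tcons (P : Set (GClause α)) (M : Set α) : Set α →o Set α where
  toFun I := I ∪ {a | ∃ c ∈ P, c.head = a ∧ (∀ b ∈ c.pos, b ∈ I) ∧ (∀ b ∈ c.neg, b ∉ M)}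
  monotone' := by
    intro I J h x hx
    rcases hx with hx | ⟨c, hc, h1, h2, h3⟩
    · exact Or.inl (h hx)
    · exact Or.inr ⟨c, hc, h1, fun b hb => h (h2 b hb), h3⟩

/-- The interpretation `I(P,M)`: least fixed point of the immediate-consequence
operator of the reduct `P^M`. -/
def interp (P : Set (GClause α)) (M : Set α) : Set α := OrderHom.lfp (tcons P M)

/-- `M` is a stable model (answer set) of `P` iff `M = I(P,M)`. -/
def IsStable (P : Set (GClause α)) (M : Set α) : Prop := M = interp P M

end ASP
namespace ASP

/-- Formulas of minimal implicational propositional logic over atoms `α`. -/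
inductive PForm (α : Type) where
  | at_ : α → PForm α
  | imp : PForm α → PForm α → PForm α

/-- Provability in minimal propositional logic (only → introduction/elimination). -/
inductive PPrv {α : Type} : Set (PForm α) → PForm α → Prop
  | ax {Γ : Set (PForm α)} {φ : PForm α} : φ ∈ Γ → PPrv Γ φ
  | impI {Γ : Set (PForm α)} {φ ψ : PForm α} : PPrv (insert φ Γ) ψ → PPrv Γ (.imp φ ψ)
  | impE {Γ : Set (PForm α)} {φ ψ : PForm α} : PPrv Γ (.imp φ ψ) → PPrv Γ φ → PPrv Γ ψ

end ASP
namespace TR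

/-- A ground atom `R(c̄)`: predicate index plus constant arguments. -/
structure GA where
  pred : ℕ
  args : List ℕ
deriving DecidableEq

/-- Atom alphabet of the translated formula φ: for every program predicate `R`
there are `R`, `R̄`, `R!`, `R?`; pair predicates `RP`; clause predicates `K⁰`
and nullary `K̄⁰`; and the nullary `•, ∘, A, B, ⊙`. -/
inductive At where
  | pos : GA → At
  | bar : GA → At
  | bang : GA → At
  | quest : GA → At
  | mem : GA → GA → At
  | k : ℕ → List ℕ → At
  | kbar : ℕ → At
  | bullet : At
  | circ : At
  | unsound : At
  | incomplete : At
  | lup : At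
deriving DecidableEq

abbrev F := ASP.PForm At

def av (a : At) : F := .at_ a

def imps (l : List F) (t : F) : F := l.foldr ASP.PForm.imp t

/-- Axioms (1): `(R(c̄)→⊙) → (R̄(c̄)→⊙) → ⊙`. -/
def ax1 (B : Set GA) : Set F :=
  {f | ∃ a ∈ B, f = .imp (.imp (av (.pos a)) (av .lup)) (.imp (.imp (av (.bar a)) (av .lup)) (av .lup))}

/-- Axioms (2): `Ω→⊙`, `A→⊙`, `B→⊙`. -/
def ax2 (ω : GA) : Set F :=
  {.imp (av (.pos ω)) (av .lup), .imp (av .unsound) (av .lup), .imp (av .incomplete) (av .lup)}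

/-- Axioms (3): `R̄(c̄) → (R!(c̄)→•) → A`. -/
def ax3 (B : Set GA) : Set F :=
  {f | ∃ a ∈ B, f = .imp (av (.bar a)) (.imp (.imp (av (.bang a)) (av .bullet)) (av .unsound))}

/-- Axioms (4): `R(c̄) → (R?(c̄)→∘) → B`. -/
def ax4 (B : Set GA) : Set F :=
  {f | ∃ a ∈ B, f = .imp (av (.pos a)) (.imp (.imp (av (.quest a)) (av .circ)) (av .incomplete))}

/-- Axiom (5) for a ground clause `R(ē) ← P₁(c̄₁),…,P_r(c̄_r), ¬S₁(d̄₁),…,¬S_s(d̄_s)`: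
`R!(ē) → (P₁!(c̄₁)→•) → ⋯ → (P_r!(c̄_r)→•) → S̄₁(d̄₁) → ⋯ → S̄_s(d̄_s) → •`. -/
def clax (c : ASP.GClause GA) : F :=
  .imp (av (.bang c.head))
    (imps (c.pos.map (fun b => .imp (av (.bang b)) (av .bullet)) ++
           c.neg.map (fun s => av (.bar s))) (av .bullet))

def ax5 (Pg : List (ASP.GClause GA)) : Set F := {f | ∃ c ∈ Pg, f = clax c}

/-- Axioms (6): `R?(c̄) → (K⁰₁(c̄)→K̄⁰₁) → ⋯ → (K⁰_l(c̄)→K̄⁰_l) → ∘`,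
where K₁,…,K_l are all clauses whose target predicate is that of the atom. -/
def ax6 (Pg : List (ASP.GClause GA)) (B : Set GA) : Set F :=
  {f | ∃ a ∈ B, f = .imp (av (.quest a))
    (imps (((Pg.zipIdx.map Prod.swap).filter (fun jc => jc.2.head.pred == a.pred)).map
      (fun jc => ASP.PForm.imp (av (.k jc.1 a.args)) (av (.kbar jc.1)))) (av .circ))}

/-- Axioms (7)-(8): a mismatch between the queried arguments and the clause head
arguments immediately yields `K⁰(c̄) → K̄⁰`. -/
def ax7 (Pg : List (ASP.GClause GA)) (B : Set GA) : Set F :=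
  {f | ∃ jc ∈ (Pg.zipIdx.map Prod.swap), ∃ a ∈ B, a.pred = jc.2.head.pred ∧ a.args ≠ jc.2.head.args ∧
    f = .imp (av (.k jc.1 a.args)) (av (.kbar jc.1))}

/-- Axioms (10): `K⁰(ē) → (P?(c̄) → RP(ē,c̄) → ∘) → K̄⁰`, for each positive body atom. -/
def ax10 (Pg : List (ASP.GClause GA)) : Set F :=
  {f | ∃ jc ∈ (Pg.zipIdx.map Prod.swap), ∃ b ∈ jc.2.pos, f = .imp (av (.k jc.1 jc.2.head.args))
    (.imp (.imp (av (.quest b)) (.imp (av (.mem jc.2.head b)) (av .circ))) (av (.kbar jc.1)))}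

/-- Axioms (11): `K⁰(ē) → S(d̄) → K̄⁰`, for each negative body atom `¬S(d̄)`. -/
def ax11 (Pg : List (ASP.GClause GA)) : Set F :=
  {f | ∃ jc ∈ (Pg.zipIdx.map Prod.swap), ∃ s ∈ jc.2.neg, f = .imp (av (.k jc.1 jc.2.head.args))
    (.imp (av (.pos s)) (av (.kbar jc.1)))}

/-- Axioms (12): transitivity `RP(ā,b̄) → PQ(b̄,c̄) → (RQ(ā,c̄)→∘) → ∘`. -/
def ax12 (B : Set GA) : Set F :=
  {f | ∃ a ∈ B, ∃ b ∈ B, ∃ c ∈ B, f = .imp (av (.mem a b)) (.imp (av (.mem b c))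
    (.imp (.imp (av (.mem a c)) (av .circ)) (av .circ)))}

/-- Axioms (13): loop detection `PP(ā,ā) → ∘`. -/
def ax13 (B : Set GA) : Set F := {f | ∃ a ∈ B, f = .imp (av (.mem a a)) (av .circ)}

/-- All axioms of the translated formula φ. -/
def Axioms (Pg : List (ASP.GClause GA)) (B : Set GA) (ω : GA) : Set F :=
  ax1 B ∪ ax2 ω ∪ ax3 B ∪ ax4 B ∪ ax5 Pg ∪ ax6 Pg B ∪ ax7 Pg B ∪
    ax10 Pg ∪ ax11 Pg ∪ ax12 B ∪ ax13 B

/-- `Γ_M`: the union of `M ∪ M̄` with the axioms of φ. -/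
def GammaM (Pg : List (ASP.GClause GA)) (B : Set GA) (ω : GA) (M : Set GA) : Set F :=
  Axioms Pg B ω ∪ {f | ∃ a ∈ M, f = av (.pos a)} ∪ {f | ∃ a ∈ B, a ∉ M ∧ f = av (.bar a)}

/-- The implicational formula of a clause of `P̄` (negative atoms replaced by barred ones). -/
def cbarF (c : ASP.GClause GA) : F :=
  imps (c.pos.map (fun b => av (.pos b)) ++ c.neg.map (fun s => av (.bar s))) (av (.pos c.head))

/-- The environment `P̄ ∪ M̄`. -/
def PbarMbar (Pg : List (ASP.GClause GA)) (B : Set GA) (M : Set GA) : Set F :=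
  {f | ∃ c ∈ Pg, f = cbarF c} ∪ {f | ∃ a ∈ B, a ∉ M ∧ f = av (.bar a)}

def progSet (Pg : List (ASP.GClause GA)) : Set (ASP.GClause GA) := {c | c ∈ Pg}

/-- All atoms of the program lie in the Herbrand base `B`. -/
def WfProg (Pg : List (ASP.GClause GA)) (B : Set GA) : Prop :=
  ∀ c ∈ Pg, c.head ∈ B ∧ (∀ b ∈ c.pos, b ∈ B) ∧ (∀ s ∈ c.neg, s ∈ B)

end TR

/-!
Since `R(a) ∈ Γ_M`, axiom (4) reduces `B` to deriving `∘` from `R?(a)`, where `a ∉ I(P,M)`.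
Axiom (6) splits this over the clauses `K` for the predicate of `a`: those whose head differs
from `a` are closed by (7); one with head `a` is blocked, since `a ∉ I(P,M)`, either by a
negative literal `¬s` with `s ∈ M`, closed by (11), or by a positive body atom `b ∉ I(P,M)`,
for which (10) asks for `∘` from `b?` and `RP(a,b)`: the same problem for `b`. Along this
descent the transitivity axioms (12) keep `RP(x,b)` for every atom `x` visited so far, so a
repeated atom is caught by the loop axiom (13); as the body atoms are finitely many, the descent
terminates.
-/

namespace ASP

variable {α : Type} {Γ Γ' : Set (PForm α)} {φ χ : PForm α}

theorem PPrv.mono (h : PPrv Γ φ) (hΓ : Γ ⊆ Γ') : PPrv Γ' φ := by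
  induction h generalizing Γ' with
  | ax h => exact .ax (hΓ h)
  | impI _ ih => exact .impI (ih (Set.insert_subset_insert hΓ))
  | impE _ _ ih₁ ih₂ => exact .impE (ih₁ hΓ) (ih₂ hΓ)

theorem PPrv.imp_of_imp_imp {ψ : PForm α} (h : PPrv Γ (φ.imp (ψ.imp χ))) (hψ : PPrv Γ ψ) :
    PPrv Γ (φ.imp χ) :=
  .impI (.impE ((h.mono (Set.subset_insert _ _)).impE (.ax (Set.mem_insert _ _)))
    (hψ.mono (Set.subset_insert _ _)))

theorem PPrv.of_union_image_of_dneg {ι : Type} {ψ : ι → PForm α} (s : Finset ι)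
    (hs : ∀ i ∈ s, PPrv Γ (((ψ i).imp χ).imp χ)) (h : PPrv (Γ ∪ ψ '' s) χ) : PPrv Γ χ := by
  induction s using Finset.cons_induction generalizing Γ with
  | empty => simpa using h
  | cons i s hi ih =>
    refine (hs i (Finset.mem_cons_self i s)).impE (.impI (ih (fun j hj => ?_) (h.mono ?_)))
    · exact (hs j (Finset.mem_cons_of_mem hj)).mono (Set.subset_insert _ _)
    · simp only [Finset.coe_cons, Set.image_insert_eq, Set.union_insert, Set.insert_union,
        subset_refl]

theorem clause_blocked_of_not_mem_interp {P : Set (GClause α)} {M : Set α} {a : α}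
    (ha : a ∉ interp P M) {c : GClause α} (hc : c ∈ P) (hca : c.head = a) :
    (∃ s ∈ c.neg, s ∈ M) ∨ ∃ b ∈ c.pos, b ∉ interp P M := by
  by_contra! hcon
  apply ha
  rw [interp, ← OrderHom.map_lfp]
  exact Or.inr ⟨c, hc, hca, hcon.2, hcon.1⟩

end ASP

namespace TR

open ASP

theorem prv_of_prv_imps {Γ : Set F} {l : List F} {t : F}
    (h : PPrv Γ (imps l t)) (hl : ∀ f ∈ l, PPrv Γ f) : PPrv Γ t := by
  induction l with
  | nil => exact h
  | cons f l ih => exact ih (h.impE (hl f List.mem_cons_self)) fun g hg => hl g (.tail _ hg)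

def bodyAtoms (Pg : List (GClause GA)) : Finset GA :=
  (Pg.flatMap GClause.pos).toFinset

section

variable {Pg : List (GClause GA)} {B : Set GA} {ω : GA} {M : Set GA}

theorem pos_mem_gammaM {a : GA} (ha : a ∈ M) : av (.pos a) ∈ GammaM Pg B ω M :=
  .inl (.inr ⟨a, ha, rfl⟩)

theorem prv_of_mem_axioms {Δ : Set F} (hΓ : GammaM Pg B ω M ⊆ Δ) {S : Set F} {f : F}
    (hf : f ∈ S) (hS : S ⊆ Axioms Pg B ω := by unfold TR.Axioms; tauto_set) : PPrv Δ f :=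
  .ax (hΓ (.inl (.inl (hS hf))))

theorem prv_circ_of_trans {Δ : Set F} (hΓ : GammaM Pg B ω M ⊆ Δ) {L : Finset GA} {a b : GA}
    (hLB : ∀ x ∈ L, x ∈ B) (haB : a ∈ B) (hbB : b ∈ B) (hLa : ∀ x ∈ L, av (.mem x a) ∈ Δ)
    (hab : av (.mem a b) ∈ Δ) (h : PPrv (Δ ∪ (fun x => av (.mem x b)) '' L) (av .circ)) :
    PPrv Δ (av .circ) :=
  .of_union_image_of_dneg L (fun x hx =>
    ((prv_of_mem_axioms hΓ (S := ax12 B) ⟨x, hLB x hx, a, haB, b, hbB, rfl⟩).impE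
      (.ax (hLa x hx))).impE (.ax hab)) h

theorem prv_circ_of_quest {Δ : Set F} (hΓ : GammaM Pg B ω M ⊆ Δ) {a : GA}
    (hq : av (.quest a) ∈ Δ) (haB : a ∈ B) (haI : a ∉ interp (progSet Pg) M)
    (hpos : ∀ c ∈ Pg, c.head = a → ∀ b ∈ c.pos, b ∉ interp (progSet Pg) M →
      PPrv Δ (.imp (av (.quest b)) (.imp (av (.mem a b)) (av .circ)))) :
    PPrv Δ (av .circ) := by
  refine prv_of_prv_imps ((prv_of_mem_axioms hΓ (S := ax6 Pg B) ⟨a, haB, rfl⟩).impE (.ax hq))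
    fun f hf => ?_
  obtain ⟨⟨j, c⟩, hfilter, rfl⟩ := List.mem_map.1 hf
  obtain ⟨hjc, hpred⟩ := List.mem_filter.1 hfilter
  have hc : c ∈ Pg := by
    obtain ⟨⟨c', j'⟩, h, hcj⟩ := List.mem_map.1 hjc
    cases hcj
    exact List.fst_mem_of_mem_zipIdx h
  by_cases hca : c.head = a
  · subst hca
    rcases clause_blocked_of_not_mem_interp haI hc rfl with ⟨s, hs, hsM⟩ | ⟨b, hb, hbI⟩
    · exact (prv_of_mem_axioms hΓ (S := ax11 Pg) ⟨(j, c), hjc, s, hs, rfl⟩).imp_of_imp_imp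
        (.ax (hΓ (pos_mem_gammaM hsM)))
    · exact (prv_of_mem_axioms hΓ (S := ax10 Pg) ⟨(j, c), hjc, b, hb, rfl⟩).imp_of_imp_imp
        (hpos c hc rfl b hb hbI)
  · refine prv_of_mem_axioms hΓ (S := ax7 Pg B)
      ⟨(j, c), hjc, a, haB, (beq_iff_eq.1 hpred).symm, fun hargs => hca ?_, rfl⟩
    cases a
    cases hhead : c.head
    simp_all

theorem prv_circ_of_not_mem_interp {Δ : Set F} (hW : WfProg Pg B) (hΓ : GammaM Pg B ω M ⊆ Δ)
    {L : Finset GA} {a : GA} (hq : av (.quest a) ∈ Δ) (hLa : ∀ x ∈ L, av (.mem x a) ∈ Δ)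
    (haB : a ∈ B) (hLB : ∀ x ∈ L, x ∈ B) (haI : a ∉ interp (progSet Pg) M) :
    PPrv Δ (av .circ) := by
  refine prv_circ_of_quest hΓ hq haB haI fun c hc _ b hb hbI => .impI (.impI ?_)
  have hbB : b ∈ B := (hW c hc).2.1 b hb
  set Δ' := insert (av (.mem a b)) (insert (av (.quest b)) Δ)
  have hΔ : Δ ⊆ Δ' := (Set.subset_insert _ _).trans (Set.subset_insert _ _)
  refine prv_circ_of_trans (hΓ.trans hΔ) hLB haB hbB (fun x hx => hΔ (hLa x hx))
    (Set.mem_insert _ _) ?_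
  set Δ'' := Δ' ∪ (fun x => av (.mem x b)) '' L
  have hΔ' : Δ' ⊆ Δ'' := Set.subset_union_left
  have hΓ'' : GammaM Pg B ω M ⊆ Δ'' := hΓ.trans (hΔ.trans hΔ')
  have hLb : ∀ x ∈ insert a L, av (.mem x b) ∈ Δ'' := by
    intro x hx
    rcases Finset.mem_insert.1 hx with rfl | hx
    · exact hΔ' (Set.mem_insert _ _)
    · exact Or.inr ⟨x, hx, rfl⟩
  by_cases hbL : b ∈ insert a L
  · exact (prv_of_mem_axioms hΓ'' (S := ax13 B) ⟨b, hbB, rfl⟩).impE (.ax (hLb b hbL))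
  · have hbody : b ∈ bodyAtoms Pg := List.mem_toFinset.2 (List.mem_flatMap.2 ⟨c, hc, hb⟩)
    exact prv_circ_of_not_mem_interp hW hΓ'' (hΔ' (Set.mem_insert_of_mem _ (Set.mem_insert _ _)))
      hLb hbB ((Finset.forall_mem_insert ..).2 ⟨haB, hLB⟩) hbI
termination_by (bodyAtoms Pg \ insert a L).card
decreasing_by
  rw [Finset.sdiff_insert]
  exact Finset.card_erase_lt_of_mem (Finset.mem_sdiff.2 ⟨hbody, hbL⟩)

end

end TR

/-- If P is incomplete for M (some atom is in M but not in I(P,M)) then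
`Γ_M ⊢ B` is derivable. -/
theorem stmt10 (Pg : List (ASP.GClause TR.GA)) (B : Set TR.GA) (ω : TR.GA)
    (M : Set TR.GA) (hW : TR.WfProg Pg B) (hM : M ⊆ B)
    (h : ∃ a ∈ M, a ∉ ASP.interp (TR.progSet Pg) M) :
    ASP.PPrv (TR.GammaM Pg B ω M) (TR.av .incomplete) := by
  obtain ⟨a, haM, haI⟩ := h
  refine .impE (.impE (TR.prv_of_mem_axioms subset_rfl (S := TR.ax4 B) ⟨a, hM haM, rfl⟩)
    (.ax (TR.pos_mem_gammaM haM))) (.impI ?_)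
  exact TR.prv_circ_of_not_mem_interp hW (Set.subset_insert _ _) (Set.mem_insert _ _)
    (L := ∅) (by simp) (hM haM) (by simp) haI
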